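/- Let V be a finite set with |V| ≥ 5, A = (a_{ij})_{i,j∈V} a skew-symmetric matrix, and Y ⊆ V with |Y| ≥ 2. If C is a clan of A with |C ∩ Y| = 1 and V = C ∪ Y, then A is inseparable if and only if A[Y] is inseparable. -/
import Mathlib


open Matrix

/-- `I` is a clan of the matrix `A`. -/
def IsClan {V K : Type*} (A : Matrix V V K) (I : Finset V) : Prop :=
  ∀ i ∈ I, ∀ j ∈ I, ∀ x ∉ I, A x i = A x j ∧ A i x = A j x

/-- `I` is a clan of the principal submatrix `A[W]`. -/
def IsClanIn {V K : Type*} [DecidableEq V] (A : Matrix V V K) (W I : Finset V) : Prop :=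
  I ⊆ W ∧ ∀ i ∈ I, ∀ j ∈ I, ∀ x ∈ W \ I, A x i = A x j ∧ A i x = A j x

/-- The principal submatrix `A[W]` is separable. -/
def SeparableIn {V K : Type*} [DecidableEq V] (A : Matrix V V K) (W : Finset V) : Prop :=
  ∃ I : Finset V, I ⊆ W ∧ I.Nonempty ∧ (W \ I).Nonempty ∧
    IsClanIn A W I ∧ IsClanIn A W (W \ I)

/-- A singleton is always a clan in any `W` containing it. -/
lemma singleton_clanIn {V K : Type*} [DecidableEq V] (A : Matrix V V K) (W : Finset V)
    (c : V) (hc : c ∈ W) : IsClanIn A W {c} := by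
  refine ⟨Finset.singleton_subset_iff.mpr hc, ?_⟩
  intro i hi j hj x _
  simp only [Finset.mem_singleton] at hi hj
  subst hi; subst hj; exact ⟨rfl, rfl⟩

/-- If all rows/columns of `Y \ {c}` agree at some `d ∈ C` outside `Y`, then `Y` separates
into `{c}` and `Y \ {c}`. -/
lemma sep_of_const {V K : Type*} [DecidableEq V] (A : Matrix V V K)
    (Y : Finset V) (hY : 2 ≤ Y.card) (c : V) (hcY : c ∈ Y) (d : V)
    (h : ∀ i ∈ Y, i ≠ c → ∀ j ∈ Y, j ≠ c → A i d = A j d ∧ A d i = A d j)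
    (C : Finset V) (hC : IsClan A C) (hcC : c ∈ C) (hdC : d ∈ C)
    (hnotC : ∀ x ∈ Y, x ≠ c → x ∉ C) :
    SeparableIn A Y := by
  refine ⟨{c}, Finset.singleton_subset_iff.mpr hcY, ⟨c, Finset.mem_singleton_self c⟩, ?_,
    singleton_clanIn A Y c hcY, Finset.sdiff_subset, ?_⟩
  · rw [Finset.sdiff_nonempty]
    intro hsub
    have := Finset.card_le_card hsub
    simp only [Finset.card_singleton] at this
    omega
  · intro i hi j hj x hx
    simp only [Finset.mem_sdiff, Finset.mem_singleton] at hi hj hx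
    have hxc : x = c := by
      by_contra hne
      exact hx.2 ⟨hx.1, hne⟩
    rw [hxc]
    have hiC : i ∉ C := hnotC i hi.1 hi.2
    have hjC : j ∉ C := hnotC j hj.1 hj.2
    have h1 := hC c hcC d hdC i hiC
    have h2 := hC c hcC d hdC j hjC
    have h3 := h i hi.1 hi.2 j hj.1 hj.2
    -- h1 : A i c = A i d ∧ A c i = A d i,  h2 similarly for j
    refine ⟨?_, ?_⟩
    · rw [h1.2, h2.2]; exact h3.2
    · rw [h1.1, h2.1]; exact h3.1

/-- Lifting a separation of `Y` (with `c` in the part `I`) to a separation of the whole matrix. -/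
lemma lift_sep {V K : Type*} [Fintype V] [DecidableEq V] (A : Matrix V V K)
    (Y C : Finset V) (c : V)
    (hC : IsClan A C) (hcC : c ∈ C)
    (hnotC : ∀ x ∈ Y, x ≠ c → x ∉ C)
    (hinC : ∀ x, x ∉ Y → x ∈ C)
    (I : Finset V) (hIY : I ⊆ Y) (hcI : c ∈ I)
    (hJne : (Y \ I).Nonempty)
    (hIcl : ∀ i ∈ I, ∀ j ∈ I, ∀ x ∈ Y \ I, A x i = A x j ∧ A i x = A j x)
    (hJcl : ∀ i ∈ Y \ I, ∀ j ∈ Y \ I, ∀ x ∈ Y \ (Y \ I), A x i = A x j ∧ A i x = A j x) :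
    SeparableIn A Finset.univ := by
  have key : Finset.univ \ (I ∪ C) = Y \ I := by
    ext x
    simp only [Finset.mem_sdiff, Finset.mem_univ, Finset.mem_union, true_and, not_or]
    constructor
    · rintro ⟨hxI, hxC⟩
      refine ⟨?_, hxI⟩
      by_contra hxY
      exact hxC (hinC x hxY)
    · rintro ⟨hxY, hxI⟩
      exact ⟨hxI, hnotC x hxY (fun h => hxI (h ▸ hcI))⟩
  have key2 : Finset.univ \ (Finset.univ \ (I ∪ C)) = I ∪ C :=
    Finset.sdiff_sdiff_eq_self (Finset.subset_univ _)
  refine ⟨I ∪ C, Finset.subset_univ _, ⟨c, Finset.mem_union_left _ hcI⟩, ?_,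
    ⟨Finset.subset_univ _, ?_⟩, ⟨Finset.sdiff_subset, ?_⟩⟩
  · rw [key]; exact hJne
  · intro i hi j hj x hx
    rw [key] at hx
    have hxY := (Finset.mem_sdiff.mp hx).1
    have hxI := (Finset.mem_sdiff.mp hx).2
    have hxC : x ∉ C := hnotC x hxY (fun h => hxI (h ▸ hcI))
    have red : ∀ i ∈ I ∪ C, A x i = A x c ∧ A i x = A c x := by
      intro i hi
      rcases Finset.mem_union.mp hi with hiI | hiC
      · exact hIcl i hiI c hcI x hx
      · exact hC i hiC c hcC x hxC
    obtain ⟨r1, r2⟩ := red i hi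
    obtain ⟨s1, s2⟩ := red j hj
    exact ⟨r1.trans s1.symm, r2.trans s2.symm⟩
  · intro i hi j hj x hx
    rw [key] at hi hj
    rw [key2] at hx
    have hiY := (Finset.mem_sdiff.mp hi).1
    have hiI := (Finset.mem_sdiff.mp hi).2
    have hjY := (Finset.mem_sdiff.mp hj).1
    have hjI := (Finset.mem_sdiff.mp hj).2
    by_cases hxI : x ∈ I
    · exact hJcl i hi j hj x (Finset.mem_sdiff.mpr ⟨hIY hxI,
        fun hmem => (Finset.mem_sdiff.mp hmem).2 hxI⟩)
    · have hxC : x ∈ C := (Finset.mem_union.mp hx).resolve_left hxI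
      have hiC : i ∉ C := hnotC i hiY (fun h => hiI (h ▸ hcI))
      have hjC : j ∉ C := hnotC j hjY (fun h => hjI (h ▸ hcI))
      have h1 := hC x hxC c hcC i hiC
      have h2 := hC x hxC c hcC j hjC
      have hcYI : c ∈ Y \ (Y \ I) := Finset.mem_sdiff.mpr ⟨hIY hcI,
        fun hmem => (Finset.mem_sdiff.mp hmem).2 hcI⟩
      have h3 := hJcl i hi j hj c hcYI
      -- h1 : A i x = A i c ∧ A x i = A c i ; h3 : A c i = A c j ∧ A i c = A j c
      refine ⟨?_, ?_⟩
      · rw [h1.2, h2.2]; exact h3.1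
      · rw [h1.1, h2.1]; exact h3.2

theorem inseparable_iff_submatrix {V K : Type*} [Fintype V] [DecidableEq V] [Field K]
    (hchar : (2 : K) ≠ 0)
    (A : Matrix V V K) (hskew : Aᵀ = -A)
    (hcard : 5 ≤ Fintype.card V)
    (Y : Finset V) (hY : 2 ≤ Y.card)
    (C : Finset V) (hC : IsClan A C) (hCY : (C ∩ Y).card = 1)
    (hcover : C ∪ Y = Finset.univ) :
    ¬ SeparableIn A Finset.univ ↔ ¬ SeparableIn A Y := by
  rw [not_iff_not]
  obtain ⟨c, hceq⟩ := Finset.card_eq_one.mp hCY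
  have hcCY : c ∈ C ∩ Y := hceq ▸ Finset.mem_singleton_self c
  have hcC : c ∈ C := (Finset.mem_inter.mp hcCY).1
  have hcY : c ∈ Y := (Finset.mem_inter.mp hcCY).2
  have hnotC : ∀ x ∈ Y, x ≠ c → x ∉ C := fun x hx hne hxC =>
    hne (Finset.mem_singleton.mp (hceq ▸ Finset.mem_inter.mpr ⟨hxC, hx⟩))
  have hinC : ∀ x, x ∉ Y → x ∈ C := fun x hx =>
    (Finset.mem_union.mp (hcover ▸ Finset.mem_univ x)).resolve_right hx
  constructor
  · rintro ⟨I, -, hIne, hJne, ⟨-, hIcl⟩, ⟨-, hJcl⟩⟩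
    by_cases h1 : (I ∩ Y).Nonempty
    · by_cases h2 : ((Finset.univ \ I) ∩ Y).Nonempty
      · -- both parts meet Y: restrict the separation to Y
        refine ⟨I ∩ Y, Finset.inter_subset_right, h1, ?_, ⟨Finset.inter_subset_right, ?_⟩,
          ⟨Finset.sdiff_subset, ?_⟩⟩
        · obtain ⟨x, hx⟩ := h2
          simp only [Finset.mem_inter, Finset.mem_sdiff, Finset.mem_univ, true_and] at hx
          exact ⟨x, Finset.mem_sdiff.mpr ⟨hx.2, fun hm => hx.1 (Finset.mem_inter.mp hm).1⟩⟩
        · intro i hi j hj x hx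
          simp only [Finset.mem_inter] at hi hj
          simp only [Finset.mem_sdiff, Finset.mem_inter, not_and] at hx
          have hxI : x ∉ I := fun hxI => hx.2 hxI hx.1
          exact hIcl i hi.1 j hj.1 x (Finset.mem_sdiff.mpr ⟨Finset.mem_univ x, hxI⟩)
        · intro i hi j hj x hx
          obtain ⟨hiY, hiI'⟩ := Finset.mem_sdiff.mp hi
          obtain ⟨hjY, hjI'⟩ := Finset.mem_sdiff.mp hj
          obtain ⟨hxY, hxI'⟩ := Finset.mem_sdiff.mp hx
          have hiJ : i ∈ Finset.univ \ I := Finset.mem_sdiff.mpr ⟨Finset.mem_univ i,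
            fun h => hiI' (Finset.mem_inter.mpr ⟨h, hiY⟩)⟩
          have hjJ : j ∈ Finset.univ \ I := Finset.mem_sdiff.mpr ⟨Finset.mem_univ j,
            fun h => hjI' (Finset.mem_inter.mpr ⟨h, hjY⟩)⟩
          have hxI : x ∈ I := by
            by_contra hxI
            exact hxI' (Finset.mem_sdiff.mpr ⟨hxY, fun hm => hxI (Finset.mem_inter.mp hm).1⟩)
          have hxJ : x ∈ Finset.univ \ (Finset.univ \ I) := Finset.mem_sdiff.mpr
            ⟨Finset.mem_univ x, fun hm => (Finset.mem_sdiff.mp hm).2 hxI⟩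
          exact hJcl i hiJ j hjJ x hxJ
      · -- Y ⊆ I ; pick d in the other part, which lies inside C
        rw [Finset.not_nonempty_iff_eq_empty] at h2
        obtain ⟨d, hd⟩ := hJne
        have hdY : d ∉ Y := fun hdY => by
          have : d ∈ (Finset.univ \ I) ∩ Y := Finset.mem_inter.mpr ⟨hd, hdY⟩
          rw [h2] at this; exact absurd this (Finset.notMem_empty d)
        have hdC : d ∈ C := hinC d hdY
        refine sep_of_const A Y hY c hcY d ?_ C hC hcC hdC hnotC
        intro i hiY hic j hjY hjc
        have hiI : i ∈ I := by
          by_contra hiI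
          have : i ∈ (Finset.univ \ I) ∩ Y := Finset.mem_inter.mpr
            ⟨Finset.mem_sdiff.mpr ⟨Finset.mem_univ i, hiI⟩, hiY⟩
          rw [h2] at this; exact absurd this (Finset.notMem_empty i)
        have hjI : j ∈ I := by
          by_contra hjI
          have : j ∈ (Finset.univ \ I) ∩ Y := Finset.mem_inter.mpr
            ⟨Finset.mem_sdiff.mpr ⟨Finset.mem_univ j, hjI⟩, hjY⟩
          rw [h2] at this; exact absurd this (Finset.notMem_empty j)
        have := hIcl i hiI j hjI d hd
        exact ⟨this.2, this.1⟩
    · -- Y ⊆ univ \ I ; pick d ∈ I ⊆ C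
      rw [Finset.not_nonempty_iff_eq_empty] at h1
      obtain ⟨d, hd⟩ := hIne
      have hdY : d ∉ Y := fun hdY => by
        have : d ∈ I ∩ Y := Finset.mem_inter.mpr ⟨hd, hdY⟩
        rw [h1] at this; exact absurd this (Finset.notMem_empty d)
      have hdC : d ∈ C := hinC d hdY
      refine sep_of_const A Y hY c hcY d ?_ C hC hcC hdC hnotC
      intro i hiY hic j hjY hjc
      have hiI : i ∉ I := fun hiI => by
        have : i ∈ I ∩ Y := Finset.mem_inter.mpr ⟨hiI, hiY⟩
        rw [h1] at this; exact absurd this (Finset.notMem_empty i)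
      have hjI : j ∉ I := fun hjI => by
        have : j ∈ I ∩ Y := Finset.mem_inter.mpr ⟨hjI, hjY⟩
        rw [h1] at this; exact absurd this (Finset.notMem_empty j)
      have hdm : d ∈ Finset.univ \ (Finset.univ \ I) := Finset.mem_sdiff.mpr
        ⟨Finset.mem_univ d, fun hm => (Finset.mem_sdiff.mp hm).2 hd⟩
      have := hJcl i (Finset.mem_sdiff.mpr ⟨Finset.mem_univ i, hiI⟩)
        j (Finset.mem_sdiff.mpr ⟨Finset.mem_univ j, hjI⟩) d hdm
      exact ⟨this.2, this.1⟩
  · rintro ⟨I, hIY, hIne, hJne, ⟨-, hIcl⟩, ⟨-, hJcl⟩⟩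
    by_cases hcI : c ∈ I
    · exact lift_sep A Y C c hC hcC hnotC hinC I hIY hcI hJne hIcl hJcl
    · have hcJ : c ∈ Y \ I := Finset.mem_sdiff.mpr ⟨hcY, hcI⟩
      have e : Y \ (Y \ I) = I := Finset.sdiff_sdiff_eq_self hIY
      refine lift_sep A Y C c hC hcC hnotC hinC (Y \ I) Finset.sdiff_subset hcJ ?_ hJcl ?_
      · rw [e]; exact hIne
      · rw [e]; exact hIcl
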